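/- arXiv:2403.16484 — 2 statements merged into one kernel-verified Lean document; each statement's English description precedes it below -/
import Mathlib

section
/- For every integer r ≥ 1 and every odd integer s ≥ 1, the local antimagic chromatic number of the graph DF(r, 2s) equals 3, i.e., χ_la(DF(r, 2s)) = 3. -/
namespace LocalAntimagic

variable {V W : Type*}

/-- Induced vertex label: sum of edge labels over edges incident to `v`. -/
noncomputable def fplus (G : SimpleGraph V) (f : Sym2 V → ℕ) (v : V) : ℕ :=
  ∑ᶠ e ∈ G.incidenceSet v, f e

/-- `f` is a local antimagic labeling of `G`: a bijection from the edge set onto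
`{1, …, q}` (`q` the number of edges) whose induced vertex labels distinguish
adjacent vertices. -/
def IsLocalAntimagic (G : SimpleGraph V) (f : Sym2 V → ℕ) : Prop :=
  Set.BijOn f G.edgeSet (Set.Icc 1 G.edgeSet.ncard) ∧
  ∀ ⦃u w : V⦄, G.Adj u w → fplus G f u ≠ fplus G f w

/-- The local antimagic chromatic number: the least number of distinct induced
vertex labels over all local antimagic labelings. -/
noncomputable def chiLA (G : SimpleGraph V) : ℕ :=
  sInf {c : ℕ | ∃ f : Sym2 V → ℕ, IsLocalAntimagic G f ∧ (Set.range (fplus G f)).ncard = c}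

/-- `n` disjoint copies of the path `P₃`; in copy `i`, vertex `(i,0) = uᵢ`,
`(i,1) = wᵢ`, `(i,2) = vᵢ`. -/
def nP3 (n : ℕ) : SimpleGraph (Fin n × Fin 3) :=
  SimpleGraph.fromRel (fun x y => x.1 = y.1 ∧ ((x.2 = 0 ∧ y.2 = 1) ∨ (x.2 = 1 ∧ y.2 = 2)))

/-- Join of two graphs on disjoint vertex sets. -/
def joinG {α β : Type*} (G : SimpleGraph α) (H : SimpleGraph β) : SimpleGraph (α ⊕ β) :=
  SimpleGraph.fromRel (fun x y =>
    match x, y with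
    | Sum.inl a, Sum.inl b => G.Adj a b
    | Sum.inr a, Sum.inr b => H.Adj a b
    | Sum.inl _, Sum.inr _ => True
    | Sum.inr _, Sum.inl _ => False)

/-- Disjoint union of two graphs. -/
def disjUnionG {α β : Type*} (G : SimpleGraph α) (H : SimpleGraph β) : SimpleGraph (α ⊕ β) :=
  SimpleGraph.fromRel (fun x y =>
    match x, y with
    | Sum.inl a, Sum.inl b => G.Adj a b
    | Sum.inr a, Sum.inr b => H.Adj a b
    | _, _ => False)

/-- `m` disjoint copies of `G`. -/
def copies (m : ℕ) (G : SimpleGraph V) : SimpleGraph (Fin m × V) :=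
  SimpleGraph.fromRel (fun x y => x.1 = y.1 ∧ G.Adj x.2 y.2)

/-- The fan blade graph `FB(n) = nP₃ ∨ O₁`. -/
def FB (n : ℕ) : SimpleGraph ((Fin n × Fin 3) ⊕ Fin 1) :=
  joinG (nP3 n) ⊥

/-- The graph obtained from `G` by merging vertices according to `p` (fibers of
`p` are merged into single vertices). -/
def mergeMap (G : SimpleGraph V) (p : V → W) : SimpleGraph W :=
  SimpleGraph.fromRel (fun a b => ∃ x y, G.Adj x y ∧ p x = a ∧ p y = b)

/-- No two distinct vertices of `S` are adjacent or share a common neighbor. -/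
def NoCommon (G : SimpleGraph V) (S : Set V) : Prop :=
  ∀ x ∈ S, ∀ y ∈ S, x ≠ y → ¬ G.Adj x y ∧ ∀ z, ¬ (G.Adj x z ∧ G.Adj y z)

/-- `P` is a partition of the set `S` into nonempty blocks. -/
def IsPartitionOn (S : Set V) (P : Set (Set V)) : Prop :=
  (∀ B ∈ P, B ⊆ S) ∧ (∀ v ∈ S, ∃! B, B ∈ P ∧ v ∈ B) ∧ ∀ B ∈ P, B.Nonempty

/-- `p` identifies exactly the vertices lying in a common block of `P`,
and nothing else; `p` is surjective so the codomain is exactly the merged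
vertex set. -/
def IsMergeOf (P : Set (Set V)) (p : V → W) : Prop :=
  Function.Surjective p ∧ ∀ x y : V, p x = p y ↔ (x = y ∨ ∃ B ∈ P, x ∈ B ∧ y ∈ B)


/-- The diamond fan `DF(2s)`: two copies (`c = 0,1`) of `sP₃`, plus two hub
vertices `y = Sum.inr 0` and `z = Sum.inr 1`; in copy `c`, blade `j`, position
`0,2` are the degree-1 endpoints and `1` the middle vertex of the path. -/
def DF2 (s : ℕ) : SimpleGraph ((Fin 2 × Fin s × Fin 3) ⊕ Fin 2) :=
  SimpleGraph.fromRel (fun x y =>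
    match x, y with
    | Sum.inl a, Sum.inl b =>
        a.1 = b.1 ∧ a.2.1 = b.2.1 ∧ ((a.2.2 = 0 ∧ b.2.2 = 1) ∨ (a.2.2 = 1 ∧ b.2.2 = 2))
    | Sum.inl a, Sum.inr j =>
        (j = 0 ∧ ((a.1 = 0 ∧ a.2.2 ≠ 1) ∨ (a.1 = 1 ∧ a.2.2 = 1))) ∨
        (j = 1 ∧ ((a.1 = 1 ∧ a.2.2 ≠ 1) ∨ (a.1 = 0 ∧ a.2.2 = 1)))
    | _, _ => False)

abbrev DFVert (r s : ℕ) :=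
  (Fin r × ((Fin 2 × Fin s × Fin 3) ⊕ Fin 2)) ⊕ ((Fin s × Fin 3) ⊕ Fin 1)

/-- Peanut graph `Pt(n)`: `Sum.inl (i, 0) = u_{i+1}`, `Sum.inl (i, 1) = v_{i+1}`
for `0 ≤ i ≤ 2n`, and `Sum.inr 0 = x`, `Sum.inr 1 = y`. -/
abbrev PtVert (n : ℕ) := (Fin (2*n+1) × Fin 2) ⊕ Fin 2

def Pt (n : ℕ) : SimpleGraph (PtVert n) :=
  SimpleGraph.fromRel (fun a b =>
    match a, b with
    | Sum.inl p, Sum.inl q =>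
        (p.2 = q.2 ∧ (p.1 : ℕ) + 1 = (q.1 : ℕ)) ∨
        (p.1 = q.1 ∧ (p.1 : ℕ) % 2 = 0 ∧ p.2 = 0 ∧ q.2 = 1)
    | Sum.inr j, Sum.inl p => (j = 0 ∧ (p.1 : ℕ) = 0) ∨ (j = 1 ∧ (p.1 : ℕ) = 2*n)
    | _, _ => False)

/-- Triangular bracelet `TB(n)`: `Sum.inl (j, 0) = u_{2j+1}`,
`Sum.inl (j, 1) = v_{2j+1}` for `0 ≤ j ≤ n`, and `Sum.inr j = z_{2j}`. -/
abbrev TBVert (n : ℕ) := (Fin (n+1) × Fin 2) ⊕ Fin (n+1)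

def TB (n : ℕ) : SimpleGraph (TBVert n) :=
  SimpleGraph.fromRel (fun a b =>
    match a, b with
    | Sum.inl p, Sum.inl q => p.1 = q.1 ∧ p.2 = 0 ∧ q.2 = 1
    | Sum.inr j, Sum.inl p =>
        (p.1 : ℕ) = (j : ℕ) ∨ (p.1 : ℕ) + 1 = (j : ℕ) ∨ ((j : ℕ) = 0 ∧ (p.1 : ℕ) = n)
    | _, _ => False)

/-- Disjoint union of an indexed family of graphs. -/
def sigmaG {ι : Type*} {Vf : ι → Type*} (G : ∀ a, SimpleGraph (Vf a)) :
    SimpleGraph (Σ a, Vf a) :=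
  SimpleGraph.fromRel (fun x y =>
    ∃ h : x.1 = y.1, (G y.1).Adj (cast (congrArg Vf h) x.2) y.2)

/-- `FB¹(r,s)`: `Sum.inl (i,j) = w_{i,j}`, `Sum.inr (Sum.inl i) = xᵢ`,
`Sum.inr (Sum.inr (j,0)) = uⱼ`, `Sum.inr (Sum.inr (j,1)) = vⱼ`. -/
def FB1 (r s : ℕ) : SimpleGraph ((Fin r × Fin s) ⊕ (Fin r ⊕ (Fin s × Fin 2))) :=
  SimpleGraph.fromRel (fun a b =>
    match a, b with
    | Sum.inl w, Sum.inr (Sum.inl x) => w.1 = x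
    | Sum.inl w, Sum.inr (Sum.inr uv) => w.2 = uv.1
    | Sum.inr (Sum.inl _), Sum.inr (Sum.inr _) => True
    | _, _ => False)

/-- `FB²(r,s)`: `Sum.inl (i,j,0) = u_{i,j}`, `Sum.inl (i,j,1) = v_{i,j}`,
`Sum.inr (Sum.inl i) = xᵢ`, `Sum.inr (Sum.inr j) = wⱼ`. -/
def FB2 (r s : ℕ) : SimpleGraph ((Fin r × Fin s × Fin 2) ⊕ (Fin r ⊕ Fin s)) :=
  SimpleGraph.fromRel (fun a b =>
    match a, b with
    | Sum.inl uv, Sum.inr (Sum.inl x) => uv.1 = x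
    | Sum.inl uv, Sum.inr (Sum.inr w) => uv.2.1 = w
    | Sum.inr (Sum.inl _), Sum.inr (Sum.inr _) => True
    | _, _ => False)


/-- `DF(r, 2s)`: the disjoint union of `r` copies of `DF(2s)` with one copy of `FB(s)`. -/
def DF (r s : ℕ) : SimpleGraph (DFVert r s) :=
  disjUnionG (copies r (DF2 s)) (FB s)

/-- The degree-2 vertices of `DF(r, 2s)`: the endpoint vertices of all the `P₃`'s. -/
def DFdeg2 (r s : ℕ) : Set (DFVert r s) :=
  {v | (∃ i c j pos, pos ≠ 1 ∧ v = Sum.inl (i, Sum.inl (c, j, pos))) ∨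
       (∃ j pos, pos ≠ 1 ∧ v = Sum.inr (Sum.inl (j, pos)))}

/-- The degree-3 vertices of `DF(r, 2s)`: the middle vertices of all the `P₃`'s. -/
def DFdeg3 (r s : ℕ) : Set (DFVert r s) :=
  {v | (∃ i c j, v = Sum.inl (i, Sum.inl (c, j, 1))) ∨ (∃ j, v = Sum.inr (Sum.inl (j, 1)))}

/-- The `2r+1` hub vertices (of degree `3s`) of `DF(r, 2s)`: the vertices
`y_i, z_i` of the `DF(2s)` components and the hub `x` of the `FB(s)` component. -/
def DFhubs (r s : ℕ) : Set (DFVert r s) :=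
  {v | (∃ i j, v = Sum.inl (i, Sum.inr j)) ∨ (∃ w, v = Sum.inr (Sum.inr w))}

/-!
An end vertex, the middle vertex and the hub of a path of `FB(s)` form a triangle, so every local
antimagic labeling takes at least three values on it.

For the matching labeling, cut `DF(r, 2s)` into its `K = (2r+1)s` paths `u - w - v` ("blades"),
where `u, v` are joined to one hub and `w` to another (the same one in `FB(s)`). As `s` is odd,
`K = 2t + 1`. Blade number `n < K` gets the labels `1 + k` on `uw`, `K + 1 + p` on `wv`,
`5K - k` on the spoke at `u`, `4K - p` on the spoke at `v` and `3K - n` on the spoke at `w`, where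
`k ≡ (n - 1)/2` and `p ≡ n/2` modulo `K`, so that `k + p = n + t`; these are the labels
`1, …, 5K`, each used once. Then every end vertex sums to `5K + 1` and every middle vertex to
`4K + t + 2`. Each hub sees `s` end blades and `s` middle blades, paired so that the indices of a
pair add up to a number depending only on its position in its copy of `sP₃`, hence all hubs get
one and the same, larger, sum.
-/

open Function

section LowerBound
variable {G : SimpleGraph V}

theorem card_le_ncard_range_fplus [Finite V] {f : Sym2 V → ℕ}
    (hf : ∀ ⦃u w : V⦄, G.Adj u w → fplus G f u ≠ fplus G f w) {n : ℕ} {S : Finset V}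
    (hS : G.IsNClique n S) : n ≤ (Set.range (fplus G f)).ncard := by
  have hinj : Set.InjOn (fplus G f) S := fun x hx y hy hxy => by
    by_contra hne
    exact hf (hS.isClique hx hy hne) hxy
  calc n = (S : Set V).ncard := by rw [Set.ncard_coe_finset, hS.card_eq]
    _ = (fplus G f '' S).ncard := hinj.ncard_image.symm
    _ ≤ _ := Set.ncard_le_ncard (Set.image_subset_range _ _) (Set.finite_range _)

theorem chiLA_eq_of_isNClique [Finite V] {n : ℕ} {S : Finset V} (hS : G.IsNClique n S)
    {f : Sym2 V → ℕ} (hf : IsLocalAntimagic G f) (hn : (Set.range (fplus G f)).ncard ≤ n) :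
    chiLA G = n := by
  have hmem : n ∈ {c | ∃ f, IsLocalAntimagic G f ∧ (Set.range (fplus G f)).ncard = c} :=
    ⟨f, hf, hn.antisymm (card_le_ncard_range_fplus hf.2 hS)⟩
  refine le_antisymm (Nat.sInf_le hmem) (le_csInf ⟨n, hmem⟩ ?_)
  rintro _ ⟨g, hg, rfl⟩
  exact card_le_ncard_range_fplus hg.2 hS

end LowerBound

section EdgeEnumeration
variable {G : SimpleGraph V} {ι : Type*} [Fintype ι] {edge : ι → Sym2 V}

theorem fplus_extend [DecidableEq V] (hinj : Injective edge)
    (hrange : Set.range edge = G.edgeSet) (L : ι → ℕ) (v : V) :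
    fplus G (extend edge L 0) v = ∑ i, if v ∈ edge i then L i else 0 := by
  have hinc : G.incidenceSet v = edge '' {i | v ∈ edge i} := by
    ext e
    rw [SimpleGraph.incidenceSet, Set.mem_ofPred_eq, ← hrange]
    constructor
    · rintro ⟨⟨i, rfl⟩, hv⟩
      exact ⟨i, hv, rfl⟩
    · rintro ⟨i, hv, rfl⟩
      exact ⟨⟨i, rfl⟩, hv⟩
  rw [fplus, hinc, finsum_mem_image hinj.injOn, ← Finset.sum_filter, ← finsum_mem_coe_finset]
  simp [hinj.extend_apply]

theorem bijOn_extend (hinj : Injective edge) (hrange : Set.range edge = G.edgeSet)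
    {L : ι → ℕ} (hL : Injective L) (hLmem : ∀ i, L i ∈ Finset.Icc 1 (Fintype.card ι)) :
    Set.BijOn (extend edge L 0) G.edgeSet (Set.Icc 1 G.edgeSet.ncard) := by
  classical
  have himage : Finset.univ.image L = Finset.Icc 1 (Fintype.card ι) :=
    Finset.eq_of_subset_of_card_le
      (fun _ h => by obtain ⟨i, -, rfl⟩ := Finset.mem_image.1 h; exact hLmem i)
      (by simp [Finset.card_image_of_injective _ hL])
  rw [← hrange, Set.ncard_range_of_injective hinj, Nat.card_eq_fintype_card]
  refine ⟨?_, ?_, fun n hn => ?_⟩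
  · rintro _ ⟨i, rfl⟩
    simpa [hinj.extend_apply] using hLmem i
  · rintro _ ⟨i, rfl⟩ _ ⟨j, rfl⟩ h
    simp only [hinj.extend_apply] at h
    rw [hL h]
  · obtain ⟨i, -, rfl⟩ := Finset.mem_image.1 (himage ▸ Finset.mem_Icc.2 hn)
    exact ⟨edge i, ⟨i, rfl⟩, hinj.extend_apply _ _ _⟩

end EdgeEnumeration

section Adjacency
variable {α β : Type*} {G : SimpleGraph α} {H : SimpleGraph β}

theorem disjUnionG_eq_sum : disjUnionG G H = G ⊕g H := by
  ext (a | a) (b | b)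
  · simp [disjUnionG, G.adj_comm b a, and_iff_right_of_imp G.ne_of_adj]
  · simp [disjUnionG]
  · simp [disjUnionG]
  · simp [disjUnionG, H.adj_comm b a, and_iff_right_of_imp H.ne_of_adj]

@[simp] theorem joinG_adj_inl_inl {a b : α} : (joinG G H).Adj (.inl a) (.inl b) ↔ G.Adj a b := by
  simp [joinG, G.adj_comm b a, and_iff_right_of_imp G.ne_of_adj]

@[simp] theorem joinG_adj_inr_inr {a b : β} : (joinG G H).Adj (.inr a) (.inr b) ↔ H.Adj a b := by
  simp [joinG, H.adj_comm b a, and_iff_right_of_imp H.ne_of_adj]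

@[simp] theorem joinG_adj_inl_inr {a : α} {b : β} : (joinG G H).Adj (.inl a) (.inr b) := by
  simp [joinG]

@[simp] theorem joinG_adj_inr_inl {a : α} {b : β} : (joinG G H).Adj (.inr b) (.inl a) :=
  joinG_adj_inl_inr.symm

@[simp] theorem copies_adj {m : ℕ} {x y : Fin m × α} :
    (copies m G).Adj x y ↔ x.1 = y.1 ∧ G.Adj x.2 y.2 := by
  simp only [copies, SimpleGraph.fromRel_adj, G.adj_comm y.2, eq_comm (a := y.1), or_self]
  exact and_iff_right_of_imp fun h hxy => (hxy ▸ h.2).ne rfl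

@[simp] theorem nP3_adj {n : ℕ} {x y : Fin n × Fin 3} :
    (nP3 n).Adj x y ↔ x.1 = y.1 ∧ (SimpleGraph.pathGraph 3).Adj x.2 y.2 := by
  obtain ⟨i, p⟩ := x
  obtain ⟨j, q⟩ := y
  simp only [nP3, SimpleGraph.fromRel_adj, SimpleGraph.pathGraph_adj]
  fin_cases p <;> fin_cases q <;> simp [eq_comm]

variable {s : ℕ}

@[simp] theorem DF2_adj_inl_inl {a b : Fin 2 × Fin s × Fin 3} :
    (DF2 s).Adj (.inl a) (.inl b) ↔
      a.1 = b.1 ∧ a.2.1 = b.2.1 ∧ (SimpleGraph.pathGraph 3).Adj a.2.2 b.2.2 := by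
  obtain ⟨c, j, p⟩ := a
  obtain ⟨c', j', q⟩ := b
  simp only [DF2, SimpleGraph.fromRel_adj, SimpleGraph.pathGraph_adj]
  fin_cases p <;> fin_cases q <;> simp [eq_comm]

@[simp] theorem DF2_adj_inl_inr {a : Fin 2 × Fin s × Fin 3} {h : Fin 2} :
    (DF2 s).Adj (.inl a) (.inr h) ↔ h = if a.2.2 = 1 then a.1 + 1 else a.1 := by
  obtain ⟨c, j, p⟩ := a
  simp only [DF2, SimpleGraph.fromRel_adj]
  fin_cases c <;> fin_cases h <;> by_cases hp : p = 1 <;> simp [hp]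

@[simp] theorem DF2_adj_inr_inl {a : Fin 2 × Fin s × Fin 3} {h : Fin 2} :
    (DF2 s).Adj (.inr h) (.inl a) ↔ h = if a.2.2 = 1 then a.1 + 1 else a.1 := by
  rw [SimpleGraph.adj_comm, DF2_adj_inl_inr]

@[simp] theorem DF2_not_adj_inr_inr {h h' : Fin 2} : ¬ (DF2 s).Adj (.inr h) (.inr h') := by
  simp [DF2]

end Adjacency

section BladeLabel

/-- With `halvePred`, this is halving in `ZMod (2t+1)`: `halve t w ≡ w/2` and
`halvePred t w ≡ (w-1)/2`, both represented in `[0, 2t]`. -/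
def halve (t w : ℕ) : ℕ := if w % 2 = 0 then w / 2 else t + (w + 1) / 2

def halvePred (t w : ℕ) : ℕ := if w % 2 = 0 then t + w / 2 else w / 2

theorem halve_add_halvePred (t w : ℕ) : halve t w + halvePred t w = w + t := by
  unfold halve halvePred; split_ifs <;> omega

variable {t w : ℕ}

theorem halve_lt (hw : w < 2 * t + 1) : halve t w < 2 * t + 1 := by
  unfold halve; split_ifs <;> omega

theorem halvePred_lt (hw : w < 2 * t + 1) : halvePred t w < 2 * t + 1 := by
  unfold halvePred; split_ifs <;> omega

/-- With `K = 2t+1` and `w < K`, the labels `e = 0, 1, 4, 3, 2` lie in the successive blocks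
`[1, K], [K+1, 2K], …, [4K+1, 5K]`. -/
def bladeLabel (t w : ℕ) : Fin 5 → ℕ
  | 0 => 1 + halvePred t w
  | 1 => 2 * t + 2 + halve t w
  | 2 => 10 * t + 5 - halvePred t w
  | 3 => 8 * t + 4 - halve t w
  | 4 => 6 * t + 3 - w

theorem bladeLabel_mem_Icc (hw : w < 2 * t + 1) (e : Fin 5) :
    bladeLabel t w e ∈ Finset.Icc 1 (5 * (2 * t + 1)) := by
  rw [Finset.mem_Icc]
  fin_cases e <;> simp only [bladeLabel, halve, halvePred] <;> (try split_ifs) <;> omega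

theorem bladeLabel_inj {w' : ℕ} (hw : w < 2 * t + 1) (hw' : w' < 2 * t + 1) {e e' : Fin 5}
    (h : bladeLabel t w e = bladeLabel t w' e') : w = w' ∧ e = e' := by
  fin_cases e <;> fin_cases e' <;> simp only [bladeLabel, halve, halvePred] at h <;>
    (try split_ifs at h) <;> simp <;> omega

theorem bladeLabel_zero_add_two (hw : w < 2 * t + 1) :
    bladeLabel t w 0 + bladeLabel t w 2 = 10 * t + 6 := by
  have := halvePred_lt hw
  simp only [bladeLabel]; omega

theorem bladeLabel_one_add_three (hw : w < 2 * t + 1) :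
    bladeLabel t w 1 + bladeLabel t w 3 = 10 * t + 6 := by
  have := halve_lt hw
  simp only [bladeLabel]; omega

theorem bladeLabel_zero_add_one_add_four (hw : w < 2 * t + 1) :
    bladeLabel t w 0 + bladeLabel t w 1 + bladeLabel t w 4 = 9 * t + 6 := by
  have := halve_add_halvePred t w
  simp only [bladeLabel]; omega

theorem bladeLabel_two_add_three_add_four {w' : ℕ} (hw : w < 2 * t + 1) (hw' : w' < 2 * t + 1) :
    bladeLabel t w 2 + bladeLabel t w 3 + bladeLabel t w' 4 + (w + w') = 23 * t + 12 := by
  have := halve_lt hw; have := halvePred_lt hw; have := halve_add_halvePred t w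
  simp only [bladeLabel]; omega

end BladeLabel

/-- The paths `P₃` of `DF(r, 2s)`: `inl (i, c, j)` is the `j`-th path of the `c`-th copy of
`sP₃` in the `i`-th copy of `DF(2s)`, and `inr j` is the `j`-th path of `FB(s)`. -/
abbrev Blade (r s : ℕ) := (Fin r × Fin 2 × Fin s) ⊕ Fin s

namespace Blade
variable {r s : ℕ}

def pathVert : Blade r s → Fin 3 → DFVert r s
  | .inl (i, c, j), p => .inl (i, .inl (c, j, p))
  | .inr j, p => .inr (.inl (j, p))

def endHub : Blade r s → DFVert r s
  | .inl (i, c, _) => .inl (i, .inr c)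
  | .inr _ => .inr (.inr 0)

def partner : Blade r s → Blade r s
  | .inl (i, c, j) => .inl (i, c + 1, j)
  | .inr j => .inr j

def edge (b : Blade r s) : Fin 5 → Sym2 (DFVert r s)
  | 0 => s(b.pathVert 0, b.pathVert 1)
  | 1 => s(b.pathVert 1, b.pathVert 2)
  | 2 => s(b.pathVert 0, b.endHub)
  | 3 => s(b.pathVert 2, b.endHub)
  | 4 => s(b.pathVert 1, b.partner.endHub)

def column : Blade r s → Fin s
  | .inl (_, _, j) => j
  | .inr j => j

/-- The two sides of a `DF(2s)` sit symmetrically around the row `r` of `FB(s)`, so that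
`index b + index b.partner` only depends on the column of `b`. -/
def row : Blade r s → ℕ
  | .inl (i, c, _) => if c = 0 then i else 2 * r - i
  | .inr _ => r

def index (b : Blade r s) : ℕ := b.row + (2 * r + 1) * b.column

theorem partner_involutive : Involutive (partner : Blade r s → Blade r s) := by
  rintro (⟨i, c, j⟩ | j)
  · simp [partner, add_assoc]
  · rfl

theorem row_lt (b : Blade r s) : b.row < 2 * r + 1 := by
  rcases b with ⟨i, c, j⟩ | j <;> simp only [row] <;> (try split_ifs) <;> omega

theorem index_lt (b : Blade r s) : b.index < s * (2 * r + 1) :=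
  Nat.mul_comm (2 * r + 1) s ▸ Nat.add_mul_lt_mul_of_lt_of_lt b.row_lt b.column.isLt

theorem eq_of_row_eq_of_column_eq {b b' : Blade r s} (hrow : b.row = b'.row)
    (hcol : b.column = b'.column) : b = b' := by
  rcases b with ⟨i, c, j⟩ | j <;> rcases b' with ⟨i', c', j'⟩ | j' <;>
    simp only [row, column] at hrow hcol <;> subst hcol
  · have key : c = c' ∧ (i : ℕ) = i' := by
      fin_cases c <;> fin_cases c' <;> simp at hrow ⊢ <;> omega
    rw [key.1, Fin.ext key.2]
  · split_ifs at hrow <;> omega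
  · split_ifs at hrow <;> omega
  · rfl

theorem index_injective : Injective (index : Blade r s → ℕ) := by
  intro b b' h
  have hpos : 0 < 2 * r + 1 := Nat.succ_pos _
  apply eq_of_row_eq_of_column_eq
  · simpa [index, Nat.add_mul_mod_self_left, Nat.mod_eq_of_lt (row_lt _)] using
      congrArg (· % (2 * r + 1)) h
  · simpa [index, Nat.add_mul_div_left _ _ hpos, Nat.div_eq_of_lt (row_lt _), Fin.ext_iff] using
      congrArg (· / (2 * r + 1)) h

theorem index_add_index_partner (b : Blade r s) :
    b.index + b.partner.index = 2 * (r + (2 * r + 1) * b.column) := by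
  have hrow : b.row + b.partner.row = 2 * r := by
    rcases b with ⟨i, c, j⟩ | j
    · fin_cases c <;> simp [row, partner] <;> omega
    · simp [row, partner]; ring
  have hcol : b.partner.column = b.column := by rcases b with ⟨i, c, j⟩ | j <;> rfl
  rw [index, index, hcol]
  ring_nf
  omega

theorem pathVert_inj {b b' : Blade r s} {p p' : Fin 3} :
    b.pathVert p = b'.pathVert p' ↔ b = b' ∧ p = p' := by
  rcases b with ⟨i, c, j⟩ | j <;> rcases b' with ⟨i', c', j'⟩ | j' <;>
    simp [pathVert, and_assoc]

theorem pathVert_ne_endHub (b b' : Blade r s) (p : Fin 3) : b.pathVert p ≠ b'.endHub := by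
  rcases b with ⟨i, c, j⟩ | j <;> rcases b' with ⟨i', c', j'⟩ | j' <;>
    simp [pathVert, endHub]

theorem exists_eq_pathVert_or_endHub (hs : 0 < s) (v : DFVert r s) :
    (∃ b : Blade r s, ∃ p, v = b.pathVert p) ∨ ∃ b : Blade r s, v = b.endHub := by
  rcases v with ⟨i, ⟨c, j, p⟩ | c⟩ | ⟨j, p⟩ | k
  · exact .inl ⟨.inl (i, c, j), p, rfl⟩
  · exact .inr ⟨.inl (i, c, ⟨0, hs⟩), rfl⟩
  · exact .inl ⟨.inr j, p, rfl⟩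
  · exact .inr ⟨.inr ⟨0, hs⟩, by rw [Subsingleton.elim k 0]; rfl⟩

theorem exists_edge_pathVert_pathVert (b : Blade r s) {p q : Fin 3}
    (h : (SimpleGraph.pathGraph 3).Adj p q) : ∃ e, b.edge e = s(b.pathVert p, b.pathVert q) := by
  rw [SimpleGraph.pathGraph_adj] at h
  fin_cases p <;> fin_cases q <;> simp at h
  exacts [⟨0, rfl⟩, ⟨0, Sym2.eq_swap⟩, ⟨1, rfl⟩, ⟨1, Sym2.eq_swap⟩]

theorem exists_edge_pathVert_hub (b : Blade r s) (p : Fin 3) :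
    ∃ e, b.edge e = s(b.pathVert p, if p = 1 then b.partner.endHub else b.endHub) := by
  fin_cases p
  exacts [⟨2, rfl⟩, ⟨4, rfl⟩, ⟨3, rfl⟩]

theorem edge_mem_edgeSet (b : Blade r s) (e : Fin 5) : b.edge e ∈ (DF r s).edgeSet := by
  rcases b with ⟨i, c, j⟩ | j <;> fin_cases e <;>
    simp [edge, pathVert, endHub, partner, DF, disjUnionG_eq_sum, FB, SimpleGraph.pathGraph_adj]

theorem exists_edge_of_adj {x y : DFVert r s} (h : (DF r s).Adj x y) :
    ∃ b : Blade r s, ∃ e, b.edge e = s(x, y) := by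
  rw [DF, disjUnionG_eq_sum] at h
  rcases x with ⟨i, ⟨c, j, p⟩ | c⟩ | ⟨j, p⟩ | k <;>
    rcases y with ⟨i', ⟨c', j', q⟩ | c'⟩ | ⟨j', q⟩ | k' <;> simp [FB] at h
  · obtain ⟨rfl, rfl, rfl, h⟩ := h
    exact ⟨_, exists_edge_pathVert_pathVert (.inl (i, c, j)) h⟩
  · obtain ⟨rfl, rfl⟩ := h
    obtain ⟨e, he⟩ := exists_edge_pathVert_hub (.inl (i, c, j)) p
    exact ⟨_, e, he.trans (by split_ifs <;> rfl)⟩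
  · obtain ⟨rfl, rfl⟩ := h
    obtain ⟨e, he⟩ := exists_edge_pathVert_hub (.inl (i, c', j')) q
    exact ⟨_, e, he.trans (Sym2.eq_swap.trans (by split_ifs <;> rfl))⟩
  · obtain ⟨rfl, h⟩ := h
    exact ⟨_, exists_edge_pathVert_pathVert (.inr j) h⟩
  · obtain ⟨e, he⟩ := exists_edge_pathVert_hub (.inr j) p
    exact ⟨_, e, he.trans (by rw [Subsingleton.elim k' 0]; split_ifs <;> rfl)⟩
  · obtain ⟨e, he⟩ := exists_edge_pathVert_hub (.inr j') q
    refine ⟨_, e, he.trans (Sym2.eq_swap.trans ?_)⟩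
    rw [Subsingleton.elim k 0]
    split_ifs <;> rfl

theorem edge_injective : Injective fun p : Blade r s × Fin 5 => p.1.edge p.2 := by
  rintro ⟨b, e⟩ ⟨b', e'⟩ h
  fin_cases e <;> fin_cases e' <;>
    simp [edge, pathVert_inj, pathVert_ne_endHub, (pathVert_ne_endHub _ _ _).symm] at h ⊢ <;>
    simp_all

theorem range_edge :
    Set.range (fun p : Blade r s × Fin 5 => p.1.edge p.2) = (DF r s).edgeSet := by
  refine subset_antisymm (Set.range_subset_iff.2 fun p => edge_mem_edgeSet p.1 p.2) fun e he => ?_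
  induction e using Sym2.ind with
  | _ x y =>
    obtain ⟨b, e, h⟩ := exists_edge_of_adj he
    exact ⟨(b, e), h⟩

theorem isNClique_three_inr (j : Fin s) :
    (DF r s).IsNClique 3
      {pathVert (.inr j : Blade r s) 0, pathVert (.inr j) 1, endHub (.inr j)} := by
  rw [SimpleGraph.is3Clique_triple_iff]
  exact ⟨edge_mem_edgeSet (.inr j) 0, edge_mem_edgeSet (.inr j) 2, edge_mem_edgeSet (.inr j) 4⟩

theorem sum_ite_endHub_eq (b₀ : Blade r s) (g : Fin s → ℕ) :
    ∑ b : Blade r s, (if b.endHub = b₀.endHub then g b.column else 0) = ∑ j, g j := by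
  rcases b₀ with ⟨i, c, j⟩ | j
  · fin_cases c <;> simp [Fintype.sum_sum_type, Fintype.sum_prod_type, endHub, column]
  · simp [Fintype.sum_sum_type, endHub, column]

end Blade

noncomputable def dfLabeling (r s t : ℕ) : Sym2 (DFVert r s) → ℕ :=
  extend (fun p : Blade r s × Fin 5 => p.1.edge p.2) (fun p => bladeLabel t p.1.index p.2) 0

/-- The `j`-th term is `12K - t - (n + n')` with `K = 2t+1`: the sum of the spoke labels
`5K - k`, `4K - p` of the `j`-th end blade `n` of a hub and `3K - n'` of its partner `n'`. -/
def hubValue (r s t : ℕ) : ℕ := ∑ j : Fin s, (23 * t + 12 - 2 * (r + (2 * r + 1) * (j : ℕ)))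

section Labeling
variable {r s t : ℕ}

theorem fplus_dfLabeling (v : DFVert r s) :
    fplus (DF r s) (dfLabeling r s t) v =
      ∑ b : Blade r s, ∑ e, if v ∈ b.edge e then bladeLabel t b.index e else 0 := by
  rw [dfLabeling, fplus_extend Blade.edge_injective Blade.range_edge, Fintype.sum_prod_type]

variable (hK : s * (2 * r + 1) = 2 * t + 1)
include hK

theorem pos_of_mul_eq_two_mul_add_one : 0 < s :=
  Nat.pos_of_ne_zero (by rintro rfl; simp at hK)

theorem fplus_pathVert (b₀ : Blade r s) (p : Fin 3) :
    fplus (DF r s) (dfLabeling r s t) (b₀.pathVert p) =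
      if p = 1 then 9 * t + 6 else 10 * t + 6 := by
  rw [fplus_dfLabeling, Finset.sum_eq_single b₀]
  · have hw := hK ▸ b₀.index_lt
    fin_cases p <;>
      simp [Fin.sum_univ_five, Blade.edge, Sym2.mem_iff, Blade.pathVert_inj,
        Blade.pathVert_ne_endHub]
    exacts [bladeLabel_zero_add_two hw, bladeLabel_zero_add_one_add_four hw,
      bladeLabel_one_add_three hw]
  · intro b _ hb
    simp [Fin.sum_univ_five, Blade.edge, Sym2.mem_iff, Blade.pathVert_inj,
      Blade.pathVert_ne_endHub, Ne.symm hb]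
  · simp

theorem fplus_endHub (b₀ : Blade r s) :
    fplus (DF r s) (dfLabeling r s t) b₀.endHub = hubValue r s t := by
  have hlt (b : Blade r s) : b.index < 2 * t + 1 := hK ▸ b.index_lt
  have hblade (b : Blade r s) :
      ∑ e, (if b₀.endHub ∈ b.edge e then bladeLabel t b.index e else 0) =
        (if b.endHub = b₀.endHub then bladeLabel t b.index 2 + bladeLabel t b.index 3 else 0) +
        (if b.partner.endHub = b₀.endHub then bladeLabel t b.index 4 else 0) := by
    simp [Fin.sum_univ_five, Blade.edge, Sym2.mem_iff, (Blade.pathVert_ne_endHub _ _ _).symm,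
      eq_comm, ite_add_ite]
  have hswap :
      (∑ b : Blade r s, if b.partner.endHub = b₀.endHub then bladeLabel t b.index 4 else 0) =
        ∑ b : Blade r s, if b.endHub = b₀.endHub then bladeLabel t b.partner.index 4 else 0 :=
    Fintype.sum_bijective _ Blade.partner_involutive.bijective _ _ fun b => by
      rw [Blade.partner_involutive b]
  rw [fplus_dfLabeling, Finset.sum_congr rfl fun b _ => hblade b, Finset.sum_add_distrib, hswap,
    ← Finset.sum_add_distrib, hubValue, ← Blade.sum_ite_endHub_eq b₀]
  refine Finset.sum_congr rfl fun b _ => ?_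
  rw [ite_add_ite, add_zero]
  split_ifs
  · have := bladeLabel_two_add_three_add_four (hlt b) (hlt b.partner)
    have := b.index_add_index_partner
    omega
  · rfl

theorem ten_mul_add_six_lt_hubValue : 10 * t + 6 < hubValue r s t := by
  have hs := pos_of_mul_eq_two_mul_add_one hK
  have hr : r ≤ t := by nlinarith
  calc 10 * t + 6 < 23 * t + 12 - 2 * (r + (2 * r + 1) * ((⟨0, hs⟩ : Fin s) : ℕ)) := by
        simp; omega
    _ ≤ hubValue r s t :=
      Finset.single_le_sum (f := fun j : Fin s => 23 * t + 12 - 2 * (r + (2 * r + 1) * (j : ℕ)))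
        (fun _ _ => Nat.zero_le _) (Finset.mem_univ _)

theorem isLocalAntimagic_dfLabeling (hr : 1 ≤ r) :
    IsLocalAntimagic (DF r s) (dfLabeling r s t) := by
  have hlt (b : Blade r s) : b.index < 2 * t + 1 := hK ▸ b.index_lt
  refine ⟨bijOn_extend Blade.edge_injective Blade.range_edge ?_ ?_, fun x y hxy => ?_⟩
  · rintro ⟨b, e⟩ ⟨b', e'⟩ h
    obtain ⟨hidx, rfl⟩ := bladeLabel_inj (hlt b) (hlt b') h
    rw [Blade.index_injective hidx]
  · rintro ⟨b, e⟩
    have hcard : Fintype.card (Blade r s × Fin 5) = 5 * (2 * t + 1) := by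
      simp only [Fintype.card_prod, Fintype.card_sum, Fintype.card_fin, ← hK]; ring
    exact hcard ▸ bladeLabel_mem_Icc (hlt b) e
  · have hs := pos_of_mul_eq_two_mul_add_one hK
    have ht : 1 ≤ t := by nlinarith
    have hH := ten_mul_add_six_lt_hubValue hK
    obtain ⟨b, e, he⟩ := Blade.exists_edge_of_adj hxy
    fin_cases e <;> rcases Sym2.eq_iff.1 he with ⟨rfl, rfl⟩ | ⟨rfl, rfl⟩ <;>
      simp [fplus_pathVert hK, fplus_endHub hK] <;> omega

theorem range_fplus_dfLabeling_subset :
    Set.range (fplus (DF r s) (dfLabeling r s t)) ⊆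
      ↑({10 * t + 6, 9 * t + 6, hubValue r s t} : Finset ℕ) := by
  rintro _ ⟨v, rfl⟩
  rcases Blade.exists_eq_pathVert_or_endHub (pos_of_mul_eq_two_mul_add_one hK) v with
    ⟨b, p, rfl⟩ | ⟨b, rfl⟩
  · rw [fplus_pathVert hK]
    split_ifs <;> simp
  · simp [fplus_endHub hK]

end Labeling

theorem chiLA_DF_general (r s : ℕ) (hr : 1 ≤ r) (hsodd : Odd s) :
    chiLA (DF r s) = 3 := by
  obtain ⟨t, hK⟩ : Odd (s * (2 * r + 1)) := hsodd.mul (odd_two_mul_add_one r)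
  refine chiLA_eq_of_isNClique (Blade.isNClique_three_inr ⟨0, hsodd.pos⟩)
    (isLocalAntimagic_dfLabeling hK hr) ?_
  calc _ ≤ (↑({10 * t + 6, 9 * t + 6, hubValue r s t} : Finset ℕ) : Set ℕ).ncard :=
        Set.ncard_le_ncard (range_fplus_dfLabeling_subset hK) (Finset.finite_toSet _)
    _ ≤ 3 := by rw [Set.ncard_coe_finset]; exact Finset.card_le_three

/-- For every `r ≥ 1` and odd `s ≥ 1`, `χ_{la}(DF(r, 2s)) = 3`. -/
theorem chiLA_DF (r s : ℕ) (hr : 1 ≤ r) (hsodd : Odd s) (hs : 1 ≤ s) :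
    chiLA (DF r s) = 3 :=
  chiLA_DF_general r s hr hsodd

end LocalAntimagic
end

section
/- Let r ≥ 1, let s ≥ 1 be odd, and write (2r+1)s = 2k+1. Let V_2 be the set of all (2r+1)s degree-3 vertices of DF(r, 2s), and let P be a partition of V_2 into s blocks of size 2r+1 such that each block contains exactly one degree-3 vertex of the FB(s) component and exactly two degree-3 vertices of each DF(2s) component, and no two vertices in the same block are adjacent or have a common neighbor. Let DF^2(r, 2s) be the graph obtained from DF(r, 2s) by merging each block of P into a single vertex. Then χ_la(DF^2(r, 2s)) = 3. -/
/-!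
Merging the blocks turns `DF(r, 2s)` into `FB²(2r+1, s)`. Each block contains exactly one middle
vertex of `FB(s)`, so the blocks are indexed by `j < s`; two middle vertices of one copy of `sP₃`
share a hub, so they lie in different blocks. Hence on each of the `2r` copies of `sP₃` in the
diamond fans the block index is a permutation of the paths. Renumbering the paths by it, merging
identifies the `j`-th middle vertices of all `2r+1` families of paths into one vertex `w_j`, adjacent
to all `2r+1` hubs, and the result is `FB²(2r+1, s)`.

`FB²(n, s)` contains triangles, so `χ_la ≥ 3`. For odd `n ≥ 3` and odd `s` let `N = ns`. An `n × s`
array holding `0, …, N-1` with constant column sums indexes the `N` pairs `(i, j)`; the five edges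
belonging to a pair take their labels from the five blocks `kN+1, …, (k+1)N`, permuted by
`x ↦ x + (N-1)/2 mod N`, `x ↦ 2x mod N` and their reflections `x ↦ N-1-x`. Every endpoint then sums
to `5N+1`, every hub `x_i` to `s(6N+2+(N-1)/2)` and every `w_j` to `n(8N+2+(N-1)/2)`, three distinct
values.
-/

namespace LocalAntimagic

variable {V W : Type*}

open Set Function

section Isomorphism

variable {G : SimpleGraph V} {H : SimpleGraph W}

lemma sym2Map_apply_symm_apply (e : G ≃g H) (z : Sym2 W) : Sym2.map e (Sym2.map e.symm z) = z := by
  simp [Sym2.map_map]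

lemma bijOn_sym2Map_edgeSet (e : G ≃g H) : BijOn (Sym2.map e) G.edgeSet H.edgeSet :=
  ⟨fun _ hz => e.map_mem_edgeSet_iff.2 hz, (Sym2.map.injective e.injective).injOn,
    fun z hz => ⟨Sym2.map e.symm z, e.symm.map_mem_edgeSet_iff.2 hz, sym2Map_apply_symm_apply e z⟩⟩

lemma fplus_comp_sym2Map (e : G ≃g H) (f : Sym2 W → ℕ) (v : V) :
    fplus G (f ∘ Sym2.map e) v = fplus H f (e v) := by
  refine finsum_mem_eq_of_bijOn (Sym2.map e) ⟨?_, (Sym2.map.injective e.injective).injOn, ?_⟩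
    fun _ _ => rfl
  · exact fun z hz => ⟨e.map_mem_edgeSet_iff.2 hz.1, Sym2.mem_map.2 ⟨v, hz.2, rfl⟩⟩
  · refine fun z hz => ⟨Sym2.map e.symm z, ⟨e.symm.map_mem_edgeSet_iff.2 hz.1, ?_⟩,
      sym2Map_apply_symm_apply e z⟩
    exact Sym2.mem_map.2 ⟨e v, hz.2, e.symm_apply_apply v⟩

lemma exists_labeling_of_iso (e : G ≃g H) {c : ℕ}
    (h : ∃ f, IsLocalAntimagic H f ∧ (range (fplus H f)).ncard = c) :
    ∃ f, IsLocalAntimagic G f ∧ (range (fplus G f)).ncard = c := by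
  obtain ⟨f, ⟨hbij, hadj⟩, rfl⟩ := h
  have hfplus : fplus G (f ∘ Sym2.map e) = fplus H f ∘ e := funext (fplus_comp_sym2Map e f)
  refine ⟨f ∘ Sym2.map e, ⟨?_, fun u v huv => ?_⟩, ?_⟩
  · rw [(bijOn_sym2Map_edgeSet e).ncard_eq]
    exact hbij.comp (bijOn_sym2Map_edgeSet e)
  · simpa only [hfplus, comp_apply] using hadj (e.map_adj_iff.2 huv)
  · rw [hfplus, range_comp, e.surjective.range_eq, image_univ]

lemma chiLA_eq_of_iso (e : G ≃g H) : chiLA G = chiLA H := by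
  unfold chiLA
  congr 1
  ext c
  exact ⟨exists_labeling_of_iso e.symm, exists_labeling_of_iso e⟩

end Isomorphism

section Labelings

variable {G : SimpleGraph V}

lemma three_le_ncard_range_fplus [Finite V] {f : Sym2 V → ℕ} (hf : IsLocalAntimagic G f)
    {a b c : V} (hab : G.Adj a b) (hbc : G.Adj b c) (hac : G.Adj a c) :
    3 ≤ (range (fplus G f)).ncard :=
  calc 3 = ({fplus G f a, fplus G f b, fplus G f c} : Set ℕ).ncard :=
        (ncard_eq_three.2 ⟨_, _, _, hf.2 hab, hf.2 hac, hf.2 hbc, rfl⟩).symm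
    _ ≤ _ := ncard_le_ncard (by rintro _ (rfl | rfl | rfl) <;> exact mem_range_self _)
        (finite_range _)

lemma chiLA_eq_of_forall_le {f : Sym2 V → ℕ} (hf : IsLocalAntimagic G f) {c : ℕ}
    (hc : (range (fplus G f)).ncard = c)
    (hlow : ∀ g, IsLocalAntimagic G g → c ≤ (range (fplus G g)).ncard) : chiLA G = c :=
  le_antisymm (Nat.sInf_le ⟨f, hf, hc⟩)
    (le_csInf ⟨_, f, hf, hc⟩ (by rintro _ ⟨g, hg, rfl⟩; exact hlow g hg))

lemma fplus_eq_sum {ι : Type*} [Fintype ι] [DecidableEq V] {e : ι → Sym2 V} (he : Injective e)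
    (hG : G.edgeSet = range e) (f : Sym2 V → ℕ) (v : V) :
    fplus G f v = ∑ a, if v ∈ e a then f (e a) else 0 := by
  have hinc : G.incidenceSet v = e '' {a | v ∈ e a} := by
    ext z
    simp only [SimpleGraph.incidenceSet, hG, mem_image]
    constructor
    · rintro ⟨⟨a, rfl⟩, hv⟩
      exact ⟨a, hv, rfl⟩
    · rintro ⟨a, hv, rfl⟩
      exact ⟨⟨a, rfl⟩, hv⟩
  rw [fplus, hinc, finsum_mem_image he.injOn, finsum_mem_def, finsum_eq_sum_of_fintype]
  simp [indicator_apply]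

end Labelings

section Permutations

lemma bijOn_Iio_of_injOn {N : ℕ} {f : ℕ → ℕ} (hmaps : ∀ x < N, f x < N)
    (hinj : InjOn f (Iio N)) : BijOn f (Iio N) (Iio N) :=
  ((finite_Iio N).injOn_iff_bijOn_of_mapsTo hmaps).1 hinj

lemma eq_of_modEq_of_lt {N x y : ℕ} (h : x ≡ y [MOD N]) (hx : x < N) (hy : y < N) : x = y := by
  rwa [Nat.ModEq, Nat.mod_eq_of_lt hx, Nat.mod_eq_of_lt hy] at h

def shiftHalf (N x : ℕ) : ℕ := (x + (N - 1) / 2) % N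

def doubleMod (N x : ℕ) : ℕ := 2 * x % N

def reflect (N x : ℕ) : ℕ := N - 1 - x

lemma bijOn_shiftHalf {N : ℕ} (hN : 0 < N) : BijOn (shiftHalf N) (Iio N) (Iio N) :=
  bijOn_Iio_of_injOn (fun _ _ => Nat.mod_lt _ hN) fun _ hx _ hy h =>
    eq_of_modEq_of_lt (Nat.ModEq.add_right_cancel' _ h) hx hy

lemma bijOn_doubleMod {N : ℕ} (hN : Odd N) : BijOn (doubleMod N) (Iio N) (Iio N) :=
  bijOn_Iio_of_injOn (fun _ _ => Nat.mod_lt _ hN.pos) fun _ hx _ hy h =>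
    eq_of_modEq_of_lt
      (Nat.ModEq.cancel_left_of_coprime (by simpa using hN.coprime_two_right.symm) h) hx hy

lemma bijOn_reflect (N : ℕ) : BijOn (reflect N) (Iio N) (Iio N) :=
  bijOn_Iio_of_injOn (fun x hx => by unfold reflect; omega) fun _ hx _ hy h => by
    simp only [reflect, mem_Iio] at *
    omega

lemma mod_eq_ite {N a : ℕ} (h : a < N + N) : a % N = if a < N then a else a - N := by
  split_ifs with ha
  · exact Nat.mod_eq_of_lt ha
  · rw [Nat.mod_eq_sub_mod (by omega), Nat.mod_eq_of_lt (by omega)]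

lemma add_shiftHalf {N x : ℕ} (hN : Odd N) (hx : x < N) :
    x + shiftHalf N x = doubleMod N x + (N - 1) / 2 := by
  obtain ⟨m, rfl⟩ := hN
  rw [shiftHalf, doubleMod, mod_eq_ite (by omega), mod_eq_ite (by omega)]
  split_ifs <;> omega

lemma bijOn_mul_add {K N : ℕ} {σ : ℕ → ℕ → ℕ} (hσ : ∀ k < K, BijOn (σ k) (Iio N) (Iio N)) :
    BijOn (fun p : ℕ × ℕ => p.1 * N + σ p.1 p.2) (Iio K ×ˢ Iio N) (Iio (K * N)) := by
  refine ⟨?_, ?_, ?_⟩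
  · rintro ⟨k, y⟩ ⟨hk, hy⟩
    have := (hσ k hk).mapsTo hy
    simp only [mem_Iio] at *
    nlinarith
  · rintro ⟨k, y⟩ ⟨hk, hy⟩ ⟨k', y'⟩ ⟨hk', hy'⟩ h
    have h1 := (hσ k hk).mapsTo hy
    have h2 := (hσ k' hk').mapsTo hy'
    simp only [mem_Iio] at *
    obtain rfl : k = k' := by
      have := congrArg (· / N) h
      simp only [Nat.mul_comm _ N] at this
      rwa [Nat.mul_add_div (by omega), Nat.mul_add_div (by omega), Nat.div_eq_of_lt h1,
        Nat.div_eq_of_lt h2] at this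
    simp only [Prod.mk.injEq, true_and]
    exact (hσ k hk).injOn hy hy' (by simpa using h)
  · intro m hm
    have hN : 0 < N := Nat.pos_of_ne_zero fun h => by simp [h] at hm
    have hk : m / N < K := by rw [Nat.div_lt_iff_lt_mul hN]; exact hm
    obtain ⟨y, hy, hσy⟩ := (hσ _ hk).surjOn (mem_Iio.2 (Nat.mod_lt m hN))
    exact ⟨(m / N, y), ⟨hk, hy⟩, by simp only [hσy, Nat.div_add_mod']⟩

lemma bijOn_val_univ_Iio (n : ℕ) : BijOn ((↑) : Fin n → ℕ) univ (Iio n) := by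
  simpa [Fin.range_val] using (Fin.val_injective (n := n)).injOn.bijOn_image (s := univ)

lemma bijOn_add_one_Iio (M : ℕ) : BijOn (· + 1) (Iio M) (Icc 1 M) :=
  ⟨fun _ _ => by simp_all, fun _ _ _ _ h => by simpa using h,
    fun y hy => ⟨y - 1, by simp_all; omega, by simp_all⟩⟩

end Permutations

section KotzigArray

variable {n s : ℕ}

/-- Rows `0, 1, 2` have column sums `3(s-1)/2`; the later rows come in pairs `j, s-1-j`. -/
def kotzigRow (s : ℕ) : ℕ → ℕ → ℕ
  | 0 => id
  | 1 => shiftHalf s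
  | 2 => reflect s ∘ doubleMod s
  | i + 3 => if i % 2 = 0 then id else reflect s

def kotzigArray (s i j : ℕ) : ℕ := i * s + kotzigRow s i j

lemma bijOn_kotzigRow (hs : Odd s) : ∀ i, BijOn (kotzigRow s i) (Iio s) (Iio s)
  | 0 => bijOn_id _
  | 1 => bijOn_shiftHalf hs.pos
  | 2 => (bijOn_reflect s).comp (bijOn_doubleMod hs)
  | i + 3 => by
    show BijOn (if i % 2 = 0 then id else reflect s) _ _
    split_ifs
    exacts [bijOn_id _, bijOn_reflect s]

lemma sum_kotzigRow (hn : Odd n) (hn3 : 3 ≤ n) (hs : Odd s) {j : ℕ} (hj : j < s) :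
    ∑ i ∈ Finset.range n, kotzigRow s i j = n * ((s - 1) / 2) := by
  obtain ⟨m, rfl⟩ : ∃ m, n = 2 * m + 3 := by obtain ⟨a, rfl⟩ := hn; exact ⟨a - 1, by omega⟩
  obtain ⟨b, rfl⟩ := hs
  rw [show 2 * b + 1 - 1 = 2 * b by omega, Nat.mul_div_cancel_left _ two_pos]
  clear hn hn3
  induction m with
  | zero =>
    have hd := (bijOn_doubleMod ⟨b, rfl⟩).mapsTo (mem_Iio.2 hj)
    have hsum := add_shiftHalf ⟨b, rfl⟩ hj
    simp only [mem_Iio, show (2 * b + 1 - 1) / 2 = b by omega] at hd hsum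
    simp only [Finset.sum_range_succ, Finset.sum_range_zero, kotzigRow, reflect, comp_apply,
      id_eq]
    omega
  | succ m ih =>
    have hid : kotzigRow (2 * b + 1) (2 * m + 3) j = j := by simp [kotzigRow]
    have hrev : kotzigRow (2 * b + 1) (2 * m + 1 + 3) j = 2 * b - j := by
      simp [kotzigRow, reflect, Nat.add_mod]
    rw [show 2 * (m + 1) + 3 = 2 * m + 3 + 1 + 1 by ring, Finset.sum_range_succ,
      Finset.sum_range_succ, ih, hid, show 2 * m + 3 + 1 = 2 * m + 1 + 3 by ring, hrev,
      add_assoc, Nat.add_sub_cancel' (by omega)]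
    ring

lemma bijOn_kotzigArray (hs : Odd s) :
    BijOn (fun p : ℕ × ℕ => kotzigArray s p.1 p.2) (Iio n ×ˢ Iio s) (Iio (n * s)) :=
  bijOn_mul_add fun i _ => bijOn_kotzigRow hs i

lemma sum_kotzigArray (hn : Odd n) (hn3 : 3 ≤ n) (hs : Odd s) {j : ℕ} (hj : j < s) :
    ∑ i ∈ Finset.range n, kotzigArray s i j = n * ((n * s - 1) / 2) := by
  have hrange := Finset.sum_range_id_mul_two n
  simp only [kotzigArray, Finset.sum_add_distrib, ← Finset.sum_mul, sum_kotzigRow hn hn3 hs hj]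
  obtain ⟨a, rfl⟩ := hn
  obtain ⟨b, rfl⟩ := hs
  have hN : (2 * a + 1) * (2 * b + 1) - 1 = 2 * (2 * a * b + a + b) := by ring_nf; omega
  rw [hN, show 2 * b + 1 - 1 = 2 * b by omega, Nat.mul_div_cancel_left _ two_pos,
    Nat.mul_div_cancel_left _ two_pos]
  rw [show 2 * a + 1 - 1 = 2 * a by omega] at hrange
  nlinarith

end KotzigArray

section FB2Labeling

variable {n s : ℕ}

abbrev FB2Vert (n s : ℕ) := (Fin n × Fin s × Fin 2) ⊕ (Fin n ⊕ Fin s)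

def fb2Edge : Fin 5 × Fin n × Fin s → Sym2 (FB2Vert n s)
  | (k, i, j) =>
    ![s(.inr (.inl i), .inl (i, j, 0)), s(.inr (.inr j), .inl (i, j, 1)),
      s(.inr (.inl i), .inr (.inr j)), s(.inr (.inl i), .inl (i, j, 1)),
      s(.inr (.inr j), .inl (i, j, 0))] k

lemma fb2Edge_injective : Injective (fb2Edge (n := n) (s := s)) := by
  rintro ⟨k, i, j⟩ ⟨k', i', j'⟩ h
  fin_cases k <;> fin_cases k' <;> simp_all [fb2Edge]

lemma edgeSet_FB2 : (FB2 n s).edgeSet = range fb2Edge := by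
  ext e
  induction e with
  | _ a b =>
  simp only [SimpleGraph.mem_edgeSet, mem_range]
  constructor
  · rcases a with ⟨i, j, t⟩ | i | j <;> rcases b with ⟨i', j', t'⟩ | i' | j' <;> simp [FB2] <;>
      (try rintro rfl) <;> (try fin_cases t) <;> (try fin_cases t') <;>
      first
        | exact ⟨0, _, _, rfl⟩ | exact ⟨0, _, _, Sym2.eq_swap⟩
        | exact ⟨1, _, _, rfl⟩ | exact ⟨1, _, _, Sym2.eq_swap⟩
        | exact ⟨2, _, _, rfl⟩ | exact ⟨2, _, _, Sym2.eq_swap⟩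
        | exact ⟨3, _, _, rfl⟩ | exact ⟨3, _, _, Sym2.eq_swap⟩
        | exact ⟨4, _, _, rfl⟩ | exact ⟨4, _, _, Sym2.eq_swap⟩
  · rintro ⟨⟨k, i, j⟩, h⟩
    fin_cases k <;> simp [fb2Edge] at h <;> rcases h with ⟨rfl, rfl⟩ | ⟨rfl, rfl⟩ <;> simp [FB2]

def labelPerm (N : ℕ) : ℕ → ℕ → ℕ
  | 0 => shiftHalf N
  | 1 => doubleMod N
  | 2 => id
  | 3 => reflect N ∘ doubleMod N
  | _ => reflect N ∘ shiftHalf N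

lemma bijOn_labelPerm {N : ℕ} (hN : Odd N) : ∀ k, BijOn (labelPerm N k) (Iio N) (Iio N)
  | 0 => bijOn_shiftHalf hN.pos
  | 1 => bijOn_doubleMod hN
  | 2 => bijOn_id _
  | 3 => (bijOn_reflect N).comp (bijOn_doubleMod hN)
  | _ + 4 => (bijOn_reflect N).comp (bijOn_shiftHalf hN.pos)

def fb2Label (n s : ℕ) (a : Fin 5 × Fin n × Fin s) : ℕ :=
  a.1 * (n * s) + labelPerm (n * s) a.1 (kotzigArray s a.2.1 a.2.2) + 1

lemma bijOn_fb2Label (hn : Odd n) (hs : Odd s) :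
    BijOn (fb2Label n s) univ (Icc 1 (5 * (n * s))) := by
  have harray : BijOn (fun p : Fin n × Fin s => kotzigArray s p.1 p.2) univ (Iio (n * s)) := by
    rw [← univ_prod_univ]
    exact (bijOn_kotzigArray hs).comp ((bijOn_val_univ_Iio n).prodMap (bijOn_val_univ_Iio s))
  have hpair := (bijOn_val_univ_Iio 5).prodMap harray
  rw [univ_prod_univ] at hpair
  exact (bijOn_add_one_Iio _).comp
    ((bijOn_mul_add fun k _ => bijOn_labelPerm (hn.mul hs) k).comp hpair)

noncomputable def fb2Labeling (n s : ℕ) : Sym2 (FB2Vert n s) → ℕ :=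
  extend fb2Edge (fb2Label n s) 0

lemma fb2Labeling_fb2Edge (a : Fin 5 × Fin n × Fin s) :
    fb2Labeling n s (fb2Edge a) = fb2Label n s a :=
  fb2Edge_injective.extend_apply _ _ _

lemma bijOn_fb2Labeling (hn : Odd n) (hs : Odd s) :
    BijOn (fb2Labeling n s) (FB2 n s).edgeSet (Icc 1 (5 * (n * s))) := by
  rw [edgeSet_FB2, ← image_univ, ← bijOn_comp_iff fb2Edge_injective.injOn]
  convert bijOn_fb2Label hn hs using 1
  exact funext fb2Labeling_fb2Edge

lemma fplus_fb2Labeling_end (i : Fin n) (j : Fin s) :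
    fplus (FB2 n s) (fb2Labeling n s) (.inl (i, j, 0)) =
        fb2Label n s (0, i, j) + fb2Label n s (4, i, j) ∧
      fplus (FB2 n s) (fb2Labeling n s) (.inl (i, j, 1)) =
        fb2Label n s (1, i, j) + fb2Label n s (3, i, j) := by
  simp only [fplus_eq_sum fb2Edge_injective edgeSet_FB2, fb2Labeling_fb2Edge]
  simp [Fintype.sum_prod_type, Fin.sum_univ_five, fb2Edge, ite_and, Finset.sum_ite_irrel]

lemma fplus_fb2Labeling_hub (i : Fin n) :
    fplus (FB2 n s) (fb2Labeling n s) (.inr (.inl i)) =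
      ∑ j, (fb2Label n s (0, i, j) + fb2Label n s (2, i, j) + fb2Label n s (3, i, j)) := by
  simp only [fplus_eq_sum fb2Edge_injective edgeSet_FB2, fb2Labeling_fb2Edge]
  simp [Fintype.sum_prod_type, Fin.sum_univ_five, fb2Edge, Finset.sum_add_distrib]

lemma fplus_fb2Labeling_mid (j : Fin s) :
    fplus (FB2 n s) (fb2Labeling n s) (.inr (.inr j)) =
      ∑ i, (fb2Label n s (1, i, j) + fb2Label n s (2, i, j) + fb2Label n s (4, i, j)) := by
  simp only [fplus_eq_sum fb2Edge_injective edgeSet_FB2, fb2Labeling_fb2Edge]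
  simp [Fintype.sum_prod_type, Fin.sum_univ_five, fb2Edge, Finset.sum_add_distrib]

lemma fb2Label_sums (hn : Odd n) (hs : Odd s) (i : Fin n) (j : Fin s) :
    fb2Label n s (0, i, j) + fb2Label n s (4, i, j) = 5 * (n * s) + 1 ∧
    fb2Label n s (1, i, j) + fb2Label n s (3, i, j) = 5 * (n * s) + 1 ∧
    fb2Label n s (0, i, j) + fb2Label n s (2, i, j) + fb2Label n s (3, i, j) =
      6 * (n * s) + 2 + (n * s - 1) / 2 ∧
    fb2Label n s (1, i, j) + fb2Label n s (2, i, j) + fb2Label n s (4, i, j) + (n * s - 1) / 2 =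
      8 * (n * s) + 2 + 2 * kotzigArray s i j := by
  have hN := hn.mul hs
  have hX : kotzigArray s i j < n * s :=
    (bijOn_kotzigArray (n := n) hs).mapsTo (mk_mem_prod i.isLt j.isLt)
  have hshift : shiftHalf (n * s) (kotzigArray s i j) < n * s := Nat.mod_lt _ hN.pos
  have hdouble : doubleMod (n * s) (kotzigArray s i j) < n * s := Nat.mod_lt _ hN.pos
  have hid := add_shiftHalf hN hX
  norm_num [fb2Label, labelPerm, reflect]
  omega

def fb2Value (n s : ℕ) : FB2Vert n s → ℕ
  | .inl _ => 5 * (n * s) + 1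
  | .inr (.inl _) => s * (6 * (n * s) + 2 + (n * s - 1) / 2)
  | .inr (.inr _) => n * (8 * (n * s) + 2 + (n * s - 1) / 2)

lemma fplus_fb2Labeling (hn : Odd n) (hn3 : 3 ≤ n) (hs : Odd s) :
    fplus (FB2 n s) (fb2Labeling n s) = fb2Value n s := by
  funext v
  rcases v with ⟨i, j, t⟩ | i | j
  · obtain ⟨h0, h1, -, -⟩ := fb2Label_sums hn hs i j
    fin_cases t
    exacts [(fplus_fb2Labeling_end i j).1.trans h0, (fplus_fb2Labeling_end i j).2.trans h1]
  · rw [fplus_fb2Labeling_hub, Finset.sum_congr rfl fun j _ => (fb2Label_sums hn hs i j).2.2.1]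
    simp [fb2Value]
  · have hsum : ∑ i : Fin n, kotzigArray s i j = n * ((n * s - 1) / 2) := by
      rw [Fin.sum_univ_eq_sum_range (fun i => kotzigArray s i j), sum_kotzigArray hn hn3 hs j.isLt]
    have key := Finset.sum_congr (s₁ := Finset.univ) rfl fun i _ =>
      (fb2Label_sums hn hs i j).2.2.2
    simp only [Finset.sum_add_distrib, Finset.sum_const, Finset.card_univ, Fintype.card_fin,
      smul_eq_mul, ← Finset.mul_sum, hsum] at key
    rw [fplus_fb2Labeling_mid]
    simp only [fb2Value, Finset.sum_add_distrib]
    linarith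

lemma fb2Value_separation (hn : Odd n) (hn3 : 3 ≤ n) (hs : Odd s) :
    5 * (n * s) + 1 < s * (6 * (n * s) + 2 + (n * s - 1) / 2) ∧
      5 * (n * s) + 1 < n * (8 * (n * s) + 2 + (n * s - 1) / 2) ∧
      s * (6 * (n * s) + 2 + (n * s - 1) / 2) ≠ n * (8 * (n * s) + 2 + (n * s - 1) / 2) := by
  obtain ⟨h, hh⟩ := hn.mul hs
  have hs1 := hs.pos
  simp only [hh, Nat.add_sub_cancel, Nat.mul_div_cancel_left _ two_pos]
  refine ⟨by nlinarith, by nlinarith, fun heq => ?_⟩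
  have e : s * (13 * (n * s) + 3) = n * (17 * (n * s) + 3) := by nlinarith
  rcases le_or_gt s n with hsn | hns
  · nlinarith
  · have : 13 * s < 17 * n := by nlinarith
    nlinarith

lemma fb2Value_ne_of_adj (hn : Odd n) (hn3 : 3 ≤ n) (hs : Odd s) {a b : FB2Vert n s}
    (hab : (FB2 n s).Adj a b) : fb2Value n s a ≠ fb2Value n s b := by
  obtain ⟨h1, h2, h3⟩ := fb2Value_separation hn hn3 hs
  rcases a with _ | _ | _ <;> rcases b with _ | _ | _ <;> simp [FB2] at hab <;>
    simp only [fb2Value] <;> omega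

lemma isLocalAntimagic_fb2Labeling (hn : Odd n) (hn3 : 3 ≤ n) (hs : Odd s) :
    IsLocalAntimagic (FB2 n s) (fb2Labeling n s) := by
  have hbij := bijOn_fb2Labeling hn hs
  refine ⟨?_, fun a b hab => ?_⟩
  · rwa [hbij.ncard_eq, ncard_Icc_nat, Nat.add_sub_cancel]
  · rw [fplus_fb2Labeling hn hn3 hs]
    exact fb2Value_ne_of_adj hn hn3 hs hab

theorem chiLA_FB2 (hn : Odd n) (hn3 : 3 ≤ n) (hs : Odd s) : chiLA (FB2 n s) = 3 := by
  let i : Fin n := ⟨0, by omega⟩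
  let j : Fin s := ⟨0, hs.pos⟩
  have hux : (FB2 n s).Adj (.inl (i, j, 0)) (.inr (.inl i)) := by simp [FB2]
  have hxw : (FB2 n s).Adj (.inr (.inl i)) (.inr (.inr j)) := by simp [FB2]
  have huw : (FB2 n s).Adj (.inl (i, j, 0)) (.inr (.inr j)) := by simp [FB2]
  refine chiLA_eq_of_forall_le (isLocalAntimagic_fb2Labeling hn hn3 hs) ?_
    fun g hg => three_le_ncard_range_fplus hg hux hxw huw
  have hrange : range (fplus (FB2 n s) (fb2Labeling n s)) =
      {fb2Value n s (.inl (i, j, 0)), fb2Value n s (.inr (.inl i)),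
        fb2Value n s (.inr (.inr j))} := by
    rw [fplus_fb2Labeling hn hn3 hs]
    ext y
    constructor
    · rintro ⟨_ | _ | _, rfl⟩ <;> simp [fb2Value]
    · rintro (rfl | rfl | rfl) <;> exact mem_range_self _
  rw [hrange]
  exact ncard_eq_three.2 ⟨_, _, _, fb2Value_ne_of_adj hn hn3 hs hux,
    fb2Value_ne_of_adj hn hn3 hs huw, fb2Value_ne_of_adj hn hn3 hs hxw, rfl⟩

end FB2Labeling

section Merging

variable {W' : Type*} {G : SimpleGraph V}

lemma mergeMap_eq_of_lift {H : SimpleGraph W} (φ : G →g H)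
    (hlift : ∀ a b, H.Adj a b → ∃ x y, G.Adj x y ∧ φ x = a ∧ φ y = b) : mergeMap G φ = H := by
  ext a b
  simp only [mergeMap, SimpleGraph.fromRel_adj]
  constructor
  · rintro ⟨-, ⟨x, y, hxy, rfl, rfl⟩ | ⟨x, y, hxy, rfl, rfl⟩⟩
    exacts [φ.map_adj hxy, (φ.map_adj hxy).symm]
  · exact fun hab => ⟨hab.ne, Or.inl (hlift a b hab)⟩

noncomputable def mergeMapCongr {p : V → W} {q : V → W'} (hp : Surjective p)
    (hq : Surjective q) (hpq : ∀ x y, p x = p y ↔ q x = q y) : mergeMap G p ≃g mergeMap G q :=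
  have hinj : Injective fun w => q (surjInv hp w) := fun a b h => by
    simpa only [surjInv_eq hp] using (hpq _ _).2 h
  have hcomm : ∀ x, q (surjInv hp (p x)) = q x := fun x => (hpq _ _).1 (surjInv_eq hp (p x))
  { toEquiv := Equiv.ofBijective _ ⟨hinj, fun w' =>
      let ⟨x, hx⟩ := hq w'; ⟨p x, (hcomm x).trans hx⟩⟩
    map_rel_iff' := by
      intro a b
      obtain ⟨x, rfl⟩ := hp a
      obtain ⟨y, rfl⟩ := hp b
      change (mergeMap G q).Adj (q (surjInv hp (p x))) (q (surjInv hp (p y))) ↔ _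
      simp only [hcomm, mergeMap, SimpleGraph.fromRel_adj, ne_eq, hpq] }

end Merging

section Homs

variable {α β γ : Type*} {G : SimpleGraph α} {H : SimpleGraph β} {K : SimpleGraph γ}

def disjUnionG.lift (f : G →g K) (g : H →g K) : disjUnionG G H →g K where
  toFun := Sum.elim f g
  map_rel' := by
    rintro (a | a) (b | b) ⟨-, h | h⟩
    exacts [f.map_adj h, (f.map_adj h).symm, h.elim, h.elim, h.elim, h.elim, g.map_adj h,
      (g.map_adj h).symm]

def copies.lift {m : ℕ} (f : Fin m → G →g K) : copies m G →g K where
  toFun x := f x.1 x.2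
  map_rel' := by
    rintro ⟨i, a⟩ ⟨i', b⟩ ⟨-, ⟨rfl, h⟩ | ⟨rfl, h⟩⟩
    exacts [(f _).map_adj h, ((f _).map_adj h).symm]

end Homs

section MergedModel

variable {r s : ℕ}

/-- Copy `c` of `sP₃` in the `i`-th `DF(2s)` becomes row `2i + c` of `FB²(2r+1, s)`;
`FB(s)` becomes the last row. -/
def diamondRow (i : Fin r) (c : Fin 2) : Fin (2 * r + 1) := ⟨2 * i + c, by omega⟩

def endIdx (pos : Fin 3) : Fin 2 := if pos = 0 then 0 else 1

def endPos (t : Fin 2) : Fin 3 := if t = 0 then 0 else 2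

def diamondMap (β : Fin 2 → Equiv.Perm (Fin s)) (i : Fin r) :
    (Fin 2 × Fin s × Fin 3) ⊕ Fin 2 → FB2Vert (2 * r + 1) s
  | .inl (c, j, pos) =>
    if pos = 1 then .inr (.inr (β c j)) else .inl (diamondRow i c, β c j, endIdx pos)
  | .inr c => .inr (.inl (diamondRow i c))

def diamondHom (β : Fin 2 → Equiv.Perm (Fin s)) (i : Fin r) : DF2 s →g FB2 (2 * r + 1) s where
  toFun := diamondMap β i
  map_rel' := by
    rintro (⟨c, j, pos⟩ | c) (⟨c', j', pos'⟩ | c') h <;> simp [DF2] at h <;>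
      (try fin_cases pos) <;> (try fin_cases pos') <;> simp_all [diamondMap, FB2] <;>
      obtain ⟨rfl, rfl⟩ | ⟨rfl, rfl⟩ := h <;> rfl

def fanMap : (Fin s × Fin 3) ⊕ Fin 1 → FB2Vert (2 * r + 1) s
  | .inl (j, pos) => if pos = 1 then .inr (.inr j) else .inl (Fin.last _, j, endIdx pos)
  | .inr _ => .inr (.inl (Fin.last _))

def fanHom : FB s →g FB2 (2 * r + 1) s where
  toFun := fanMap
  map_rel' := by
    rintro (⟨j, pos⟩ | c) (⟨j', pos'⟩ | c') h <;> simp [FB, joinG, nP3] at h <;>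
      (try fin_cases pos) <;> (try fin_cases pos') <;> simp_all [fanMap, FB2]

def dfHom (β : Fin r → Fin 2 → Equiv.Perm (Fin s)) : DF r s →g FB2 (2 * r + 1) s :=
  disjUnionG.lift (copies.lift fun i => diamondHom (β i) i) fanHom

variable (β : Fin r → Fin 2 → Equiv.Perm (Fin s))

@[simp] lemma dfHom_inl (i : Fin r) (v : (Fin 2 × Fin s × Fin 3) ⊕ Fin 2) :
    dfHom β (.inl (i, v)) = diamondMap (β i) i v := rfl

@[simp] lemma dfHom_inr (v : (Fin s × Fin 3) ⊕ Fin 1) : dfHom β (.inr v) = fanMap v := rfl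

@[simp] lemma diamondRow_inj {i i' : Fin r} {c c' : Fin 2} :
    diamondRow i c = diamondRow i' c' ↔ i = i' ∧ c = c' := by
  simp only [diamondRow, Fin.ext_iff]
  omega

@[simp] lemma diamondRow_ne_last (i : Fin r) (c : Fin 2) : diamondRow i c ≠ Fin.last _ := by
  simp only [diamondRow, ne_eq, Fin.ext_iff, Fin.val_last]
  omega

@[simp] lemma last_ne_diamondRow (i : Fin r) (c : Fin 2) : Fin.last _ ≠ diamondRow i c :=
  (diamondRow_ne_last i c).symm

lemma eq_last_or_eq_diamondRow (h : Fin (2 * r + 1)) :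
    h = Fin.last _ ∨ ∃ i c, h = diamondRow i c := by
  by_cases hh : (h : ℕ) = 2 * r
  · exact Or.inl (Fin.ext hh)
  · exact Or.inr ⟨⟨h / 2, by omega⟩, ⟨h % 2, by omega⟩, Fin.ext (by simp [diamondRow]; omega)⟩

lemma endIdx_endPos (t : Fin 2) : endIdx (endPos t) = t := by fin_cases t <;> rfl

lemma endPos_ne_one (t : Fin 2) : endPos t ≠ 1 := by fin_cases t <;> decide

lemma dfHom_eq_of_not_mem_DFdeg3 {x : DFVert r s} (hx : x ∉ DFdeg3 r s) {y : DFVert r s}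
    (h : dfHom β x = dfHom β y) : x = y := by
  rcases x with ⟨i, ⟨c, j, pos⟩ | c⟩ | ⟨j, pos⟩ | w <;>
    rcases y with ⟨i', ⟨c', j', pos'⟩ | c'⟩ | ⟨j', pos'⟩ | w' <;>
    (try fin_cases pos) <;> (try fin_cases pos') <;>
    first
      | exact absurd (Or.inl ⟨_, _, _, rfl⟩) hx
      | exact absurd (Or.inr ⟨_, rfl⟩) hx
      | simp [diamondMap, fanMap, endIdx] at h <;> aesop

lemma DF_adj_mid_hub (i : Fin r) (c : Fin 2) (j : Fin s) :
    (DF r s).Adj (.inl (i, .inl (c, j, 1))) (.inl (i, .inr (1 - c))) := by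
  fin_cases c <;> simp [DF, disjUnionG, copies, DF2]

lemma exists_adj_dfHom_end_hub (h : Fin (2 * r + 1)) (j : Fin s) (t : Fin 2) :
    ∃ x y, (DF r s).Adj x y ∧ dfHom β x = .inl (h, j, t) ∧ dfHom β y = .inr (.inl h) := by
  obtain rfl | ⟨i, c, rfl⟩ := eq_last_or_eq_diamondRow h
  · refine ⟨.inr (.inl (j, endPos t)), .inr (.inr 0), ?_, ?_, rfl⟩
    · simp [DF, disjUnionG, FB, joinG]
    · simp [fanMap, endPos_ne_one, endIdx_endPos]
  · refine ⟨.inl (i, .inl (c, (β i c).symm j, endPos t)), .inl (i, .inr c), ?_, ?_, rfl⟩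
    · fin_cases c <;> simp [DF, disjUnionG, copies, DF2, endPos_ne_one]
    · simp [diamondMap, endPos_ne_one, endIdx_endPos]

lemma exists_adj_dfHom_end_mid (h : Fin (2 * r + 1)) (j : Fin s) (t : Fin 2) :
    ∃ x y, (DF r s).Adj x y ∧ dfHom β x = .inl (h, j, t) ∧ dfHom β y = .inr (.inr j) := by
  obtain rfl | ⟨i, c, rfl⟩ := eq_last_or_eq_diamondRow h
  · refine ⟨.inr (.inl (j, endPos t)), .inr (.inl (j, 1)), ?_, ?_, rfl⟩
    · fin_cases t <;> simp [DF, disjUnionG, FB, joinG, nP3, endPos]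
    · simp [fanMap, endPos_ne_one, endIdx_endPos]
  · refine ⟨.inl (i, .inl (c, (β i c).symm j, endPos t)),
      .inl (i, .inl (c, (β i c).symm j, 1)), ?_, ?_, by simp [diamondMap]⟩
    · fin_cases t <;> simp [DF, disjUnionG, copies, DF2, endPos]
    · simp [diamondMap, endPos_ne_one, endIdx_endPos]

lemma exists_adj_dfHom_hub_mid (h : Fin (2 * r + 1)) (j : Fin s) :
    ∃ x y, (DF r s).Adj x y ∧ dfHom β x = .inr (.inl h) ∧ dfHom β y = .inr (.inr j) := by
  obtain rfl | ⟨i, c, rfl⟩ := eq_last_or_eq_diamondRow h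
  · exact ⟨.inr (.inr 0), .inr (.inl (j, 1)), by simp [DF, disjUnionG, FB, joinG], rfl, rfl⟩
  · refine ⟨.inl (i, .inr c), .inl (i, .inl (1 - c, (β i (1 - c)).symm j, 1)), ?_, rfl,
      by simp [diamondMap]⟩
    simpa using (DF_adj_mid_hub i (1 - c) ((β i (1 - c)).symm j)).symm

lemma dfHom_surjective (hs : 0 < s) : Surjective (dfHom β) := by
  rintro (⟨h, j, t⟩ | h | j)
  · obtain ⟨x, -, -, hx, -⟩ := exists_adj_dfHom_end_hub β h j t
    exact ⟨x, hx⟩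
  · obtain ⟨x, -, -, hx, -⟩ := exists_adj_dfHom_hub_mid β h ⟨0, hs⟩
    exact ⟨x, hx⟩
  · obtain ⟨-, y, -, -, hy⟩ := exists_adj_dfHom_hub_mid β 0 j
    exact ⟨y, hy⟩

lemma mergeMap_dfHom : mergeMap (DF r s) (dfHom β) = FB2 (2 * r + 1) s := by
  refine mergeMap_eq_of_lift _ fun a b hab => ?_
  have swap : ∀ {a b}, (∃ x y, (DF r s).Adj x y ∧ dfHom β x = b ∧ dfHom β y = a) →
      ∃ x y, (DF r s).Adj x y ∧ dfHom β x = a ∧ dfHom β y = b :=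
    fun ⟨x, y, hxy, hx, hy⟩ => ⟨y, x, hxy.symm, hy, hx⟩
  rcases a with ⟨h, j, t⟩ | h | j <;> rcases b with ⟨h', j', t'⟩ | h' | j' <;>
    simp [FB2] at hab <;> (try subst hab) <;>
    first
      | exact exists_adj_dfHom_end_hub β _ _ _
      | exact exists_adj_dfHom_end_mid β _ _ _
      | exact exists_adj_dfHom_hub_mid β _ _
      | exact swap (exists_adj_dfHom_end_hub β _ _ _)
      | exact swap (exists_adj_dfHom_end_mid β _ _ _)
      | exact swap (exists_adj_dfHom_hub_mid β _ _)

end MergedModel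

section Blocks

variable {S : Set V} {P : Set (Set V)}

def SameBlock (P : Set (Set V)) (x y : V) : Prop := ∃ B ∈ P, x ∈ B ∧ y ∈ B

lemma SameBlock.symm {x y : V} (h : SameBlock P x y) : SameBlock P y x :=
  let ⟨B, hB, hx, hy⟩ := h
  ⟨B, hB, hy, hx⟩

lemma IsPartitionOn.sameBlock_self (hP : IsPartitionOn S P) {x : V} (hx : x ∈ S) :
    SameBlock P x x :=
  let ⟨B, ⟨hB, hxB⟩, _⟩ := hP.2.1 x hx
  ⟨B, hB, hxB, hxB⟩

lemma IsPartitionOn.sameBlock_trans (hP : IsPartitionOn S P) {x y z : V}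
    (hxy : SameBlock P x y) (hyz : SameBlock P y z) : SameBlock P x z := by
  obtain ⟨B, hB, hx, hy⟩ := hxy
  obtain ⟨B', hB', hy', hz⟩ := hyz
  obtain rfl := (hP.2.1 y (hP.1 B hB hy)).unique ⟨hB, hy⟩ ⟨hB', hy'⟩
  exact ⟨B, hB, hx, hz⟩

end Blocks

section DFBlocks

variable {r s : ℕ} {P : Set (Set (DFVert r s))}

lemma eq_of_sameBlock_fan (hBFB : ∀ B ∈ P, (B ∩ {v | ∃ w, v = Sum.inr w}).ncard = 1)
    {j j' : Fin s} (h : SameBlock P (.inr (.inl (j, 1))) (.inr (.inl (j', 1)))) : j = j' := by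
  obtain ⟨B, hB, hj, hj'⟩ := h
  obtain ⟨a, ha⟩ := ncard_eq_one.1 (hBFB B hB)
  have h1 : (.inr (.inl (j, 1)) : DFVert r s) ∈ B ∩ {v | ∃ w, v = Sum.inr w} := ⟨hj, _, rfl⟩
  have h2 : (.inr (.inl (j', 1)) : DFVert r s) ∈ B ∩ {v | ∃ w, v = Sum.inr w} := ⟨hj', _, rfl⟩
  rw [ha, mem_singleton_iff] at h1 h2
  simpa using h1.trans h2.symm

lemma exists_sameBlock_fan (hpart : IsPartitionOn (DFdeg3 r s) P)
    (hBFB : ∀ B ∈ P, (B ∩ {v | ∃ w, v = Sum.inr w}).ncard = 1) {x : DFVert r s}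
    (hx : x ∈ DFdeg3 r s) : ∃ j, SameBlock P x (.inr (.inl (j, 1))) := by
  obtain ⟨B, ⟨hB, hxB⟩, -⟩ := hpart.2.1 x hx
  obtain ⟨a, ha⟩ := ncard_eq_one.1 (hBFB B hB)
  obtain ⟨haB, w, rfl⟩ : a ∈ B ∩ {v | ∃ w, v = Sum.inr w} := ha ▸ rfl
  obtain ⟨i, c, j, h⟩ | ⟨j, h⟩ := hpart.1 B hB haB
  · cases h
  · exact ⟨j, B, hB, hxB, h ▸ haB⟩

lemma exists_blockPerm (hpart : IsPartitionOn (DFdeg3 r s) P)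
    (hBFB : ∀ B ∈ P, (B ∩ {v | ∃ w, v = Sum.inr w}).ncard = 1)
    (hnc : ∀ B ∈ P, NoCommon (DF r s) B) :
    ∃ β : Fin r → Fin 2 → Equiv.Perm (Fin s),
      ∀ i c j, SameBlock P (.inl (i, .inl (c, j, 1))) (.inr (.inl (β i c j, 1))) := by
  choose β hβ using fun i c j =>
    exists_sameBlock_fan hpart hBFB (x := .inl (i, .inl (c, j, 1))) (Or.inl ⟨i, c, j, rfl⟩)
  have hinj : ∀ i c, Injective (β i c) := by
    intro i c j j' h
    by_contra hne
    obtain ⟨B, hB, hj, hj'⟩ := hpart.sameBlock_trans (hβ i c j) (h ▸ (hβ i c j').symm)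
    exact (hnc B hB _ hj _ hj' (by simpa using hne)).2 _
      ⟨DF_adj_mid_hub i c j, DF_adj_mid_hub i c j'⟩
  exact ⟨fun i c => Equiv.ofBijective _ (Finite.injective_iff_bijective.1 (hinj i c)), hβ⟩

lemma sameBlock_iff_dfHom_eq (hpart : IsPartitionOn (DFdeg3 r s) P)
    (hBFB : ∀ B ∈ P, (B ∩ {v | ∃ w, v = Sum.inr w}).ncard = 1)
    {β : Fin r → Fin 2 → Equiv.Perm (Fin s)}
    (hβ : ∀ i c j, SameBlock P (.inl (i, .inl (c, j, 1))) (.inr (.inl (β i c j, 1))))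
    (x y : DFVert r s) : (x = y ∨ SameBlock P x y) ↔ dfHom β x = dfHom β y := by
  have key : ∀ x ∈ DFdeg3 r s,
      ∃ j, dfHom β x = .inr (.inr j) ∧ SameBlock P x (.inr (.inl (j, 1))) := by
    rintro x (⟨i, c, j, rfl⟩ | ⟨j, rfl⟩)
    · exact ⟨β i c j, by simp [diamondMap], hβ i c j⟩
    · exact ⟨j, rfl, hpart.sameBlock_self (Or.inr ⟨j, rfl⟩)⟩
  constructor
  · rintro (rfl | hxy)
    · rfl
    obtain ⟨B, hB, hx, hy⟩ := hxy
    obtain ⟨jx, hfx, hsx⟩ := key x (hpart.1 B hB hx)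
    obtain ⟨jy, hfy, hsy⟩ := key y (hpart.1 B hB hy)
    rw [hfx, hfy, eq_of_sameBlock_fan hBFB
      (hpart.sameBlock_trans hsx.symm (hpart.sameBlock_trans ⟨B, hB, hx, hy⟩ hsy))]
  · intro h
    by_cases hx : x ∈ DFdeg3 r s
    · by_cases hy : y ∈ DFdeg3 r s
      · obtain ⟨jx, hfx, hsx⟩ := key x hx
        obtain ⟨jy, hfy, hsy⟩ := key y hy
        obtain rfl : jx = jy := by simpa [hfx, hfy] using h
        exact Or.inr (hpart.sameBlock_trans hsx hsy.symm)
      · exact Or.inl (dfHom_eq_of_not_mem_DFdeg3 β hy h.symm).symm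
    · exact Or.inl (dfHom_eq_of_not_mem_DFdeg3 β hx h)

end DFBlocks

theorem chiLA_DF2merge_general (r s : ℕ) (hr : 1 ≤ r) (hsodd : Odd s)
    (P : Set (Set (DFVert r s)))
    (hpart : IsPartitionOn (DFdeg3 r s) P)
    (hBFB : ∀ B ∈ P, (B ∩ {v | ∃ w, v = Sum.inr w}).ncard = 1)
    (hnc : ∀ B ∈ P, NoCommon (DF r s) B)
    (W : Type*) (p : DFVert r s → W) (hp : IsMergeOf P p) :
    chiLA (mergeMap (DF r s) p) = 3 := by
  obtain ⟨β, hβ⟩ := exists_blockPerm hpart hBFB hnc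
  have hfibers : ∀ x y, p x = p y ↔ dfHom β x = dfHom β y := fun x y =>
    (hp.2 x y).trans (sameBlock_iff_dfHom_eq hpart hBFB hβ x y)
  rw [chiLA_eq_of_iso (mergeMapCongr hp.1 (dfHom_surjective β hsodd.pos) hfibers),
    mergeMap_dfHom, chiLA_FB2 (odd_two_mul_add_one r) (by omega) hsodd]

/-- `DF²(r, 2s)`: merging a suitable partition of the degree-3 vertices of
`DF(r, 2s)` into `s` blocks of size `2r+1` gives a graph with `χ_{la} = 3`. -/
theorem chiLA_DF2merge (r s k : ℕ) (hr : 1 ≤ r) (hsodd : Odd s) (hs : 1 ≤ s)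
    (hk : (2 * r + 1) * s = 2 * k + 1)
    (P : Set (Set (DFVert r s)))
    (hpart : IsPartitionOn (DFdeg3 r s) P)
    (hPcard : P.ncard = s)
    (hBcard : ∀ B ∈ P, B.ncard = 2 * r + 1)
    (hBFB : ∀ B ∈ P, (B ∩ {v | ∃ w, v = Sum.inr w}).ncard = 1)
    (hBDF : ∀ B ∈ P, ∀ i : Fin r, (B ∩ {v | ∃ w, v = Sum.inl (i, w)}).ncard = 2)
    (hnc : ∀ B ∈ P, NoCommon (DF r s) B)
    (W : Type*) (p : DFVert r s → W) (hp : IsMergeOf P p) :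
    chiLA (mergeMap (DF r s) p) = 3 :=
  chiLA_DF2merge_general r s hr hsodd P hpart hBFB hnc W p hp

end LocalAntimagic
end
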